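/- Let $Z = T\cup S_i\cup S_j$ be a $z$-tree with $k$ edges, where $|E(T)|=a$, $|S_j|=b$, $|S_i|=c$ (so $k=a+b+c$), and let $n\ge k+1$. Let $G^*$ be the ordered graph on $[n]$ with edge set $E_a\cup E_b\cup E_c$ where $E_a=\{xy: 1\le y-x<a\}$, $E_b=\{xy: x\le b, x<y\}$, $E_c=\{xy: y>n-c, x<y\}$. Then $|E_a\cup E_b\cup E_c| = (k-1)n-\binom{k}{2}$ and $G^*$ contains no copy of $Z$. -/
import Mathlib


/-- Vertex set of an ordered-graph pattern given by its edge set. -/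
def verts (E : Finset (ℕ × ℕ)) : Finset ℕ := E.image Prod.fst ∪ E.image Prod.snd

/-- An increasing (ordered) tree with its current longest edge (i,j). -/
inductive IncTree : Finset (ℕ × ℕ) → ℕ → ℕ → Prop
  | single (i j : ℕ) : i < j → IncTree {(i, j)} i j
  | right (E : Finset (ℕ × ℕ)) (i j j' : ℕ) :
      IncTree E i j → j < j' → IncTree (insert (i, j') E) i j'
  | left (E : Finset (ℕ × ℕ)) (i j i' : ℕ) :
      IncTree E i j → i' < i → IncTree (insert (i', j) E) i' j

/-- Ordered containment of a pattern in an n-vertex ordered graph. -/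
def OContains {n : ℕ} (G : SimpleGraph (Fin n)) (E : Finset (ℕ × ℕ)) : Prop :=
  ∃ f : ℕ → Fin n, (∀ a ∈ verts E, ∀ b ∈ verts E, a < b → f a < f b) ∧
    ∀ p ∈ E, G.Adj (f p.1) (f p.2)

lemma verts_insert (p : ℕ × ℕ) (E : Finset (ℕ × ℕ)) :
    verts (insert p E) = insert p.1 (insert p.2 (verts E)) := by
  unfold verts
  rw [Finset.image_insert, Finset.image_insert]
  ext v; simp [Finset.mem_union, Finset.mem_insert]; tauto

lemma mem_verts_of_mem {p : ℕ × ℕ} {E : Finset (ℕ × ℕ)} (h : p ∈ E) :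
    p.1 ∈ verts E ∧ p.2 ∈ verts E := by
  constructor
  · exact Finset.mem_union_left _ (Finset.mem_image_of_mem _ h)
  · exact Finset.mem_union_right _ (Finset.mem_image_of_mem _ h)

lemma IncTree.lt {E i j} (h : IncTree E i j) : i < j := by
  induction h with
  | single i j h => exact h
  | right E i j j' h hlt ih => omega
  | left E i j i' h hlt ih => omega

lemma IncTree.mem {E i j} (h : IncTree E i j) : (i, j) ∈ E := by
  induction h with
  | single i j h => simp
  | right E i j j' h hlt ih => simp
  | left E i j i' h hlt ih => simp

lemma IncTree.verts_between {E i j} (h : IncTree E i j) :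
    ∀ v ∈ verts E, i ≤ v ∧ v ≤ j := by
  induction h with
  | single i j h => intro v hv; simp [verts] at hv; omega
  | right E i j j' h hlt ih =>
      intro v hv
      rw [verts_insert] at hv
      simp only [Finset.mem_insert] at hv
      rcases hv with rfl | rfl | hv
      · have := h.lt; omega
      · have := h.lt; omega
      · have := ih v hv; omega
  | left E i j i' h hlt ih =>
      intro v hv
      rw [verts_insert] at hv
      simp only [Finset.mem_insert] at hv
      rcases hv with rfl | rfl | hv
      · have := h.lt; omega
      · have := h.lt; omega
      · have := ih v hv; omega

lemma IncTree.card_verts {E i j} (h : IncTree E i j) :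
    (verts E).card = E.card + 1 := by
  induction h with
  | single i j h =>
      have : verts {(i, j)} = {i, j} := by
        ext v; simp [verts]
      rw [this, Finset.card_insert_of_notMem (by simp; omega), Finset.card_singleton]
      simp
  | right E i j j' h hlt ih =>
      have hiv : i ∈ verts E := (mem_verts_of_mem h.mem).1
      have hj' : j' ∉ verts E := fun hv => by have := h.verts_between j' hv; omega
      have hne : (i, j') ∉ E := fun hm => hj' (mem_verts_of_mem hm).2
      rw [verts_insert]
      dsimp only
      rw [Finset.insert_eq_self.2 (Finset.mem_insert_of_mem hiv),
        Finset.card_insert_of_notMem hj', Finset.card_insert_of_notMem hne, ih]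
  | left E i j i' h hlt ih =>
      have hjv : j ∈ verts E := (mem_verts_of_mem h.mem).2
      have hi' : i' ∉ verts E := fun hv => by have := h.verts_between i' hv; omega
      have hne : (i', j) ∉ E := fun hm => hi' (mem_verts_of_mem hm).1
      rw [verts_insert]
      dsimp only
      rw [Finset.insert_eq_self.2 hjv,
        Finset.card_insert_of_notMem hi', Finset.card_insert_of_notMem hne, ih]

lemma key_id (t s : ℕ) :
    t * (t + 1 + s) + (s + 1).choose 2 = (t + 1 + s).choose 2 + (t + 1).choose 2 := by
  induction t with
  | zero => simp [Nat.add_comm]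
  | succ t ih =>
      have h1 : (t + 1 + 1 + s).choose 2 = (t + 1 + s).choose 2 + (t + 1 + s) := by
        have : t + 1 + 1 + s = (t + 1 + s) + 1 := by ring
        rw [this, Nat.choose_succ_succ]
        simp [Nat.choose_one_right]; ring
      have h2 : (t + 1 + 1).choose 2 = (t + 1).choose 2 + (t + 1) := by
        rw [Nat.choose_succ_succ]
        simp [Nat.choose_one_right]; ring
      have h3 : (t + 1) * (t + 1 + 1 + s) = t * (t + 1 + s) + (t + 1 + s) + (t + 1) := by
        ring
      omega

lemma card_ltPairs (m : ℕ) :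
    (((Finset.range m) ×ˢ (Finset.range m)).filter fun p => p.1 < p.2).card
      = m.choose 2 := by
  induction m with
  | zero => simp [Nat.add_comm]
  | succ m ih =>
      have hsplit :
          (((Finset.range (m+1)) ×ˢ (Finset.range (m+1))).filter fun p => p.1 < p.2)
            = (((Finset.range m) ×ˢ (Finset.range m)).filter fun p => p.1 < p.2)
              ∪ (Finset.range m).image (fun x => (x, m)) := by
        ext p
        simp only [Finset.mem_filter, Finset.mem_product, Finset.mem_range,
          Finset.mem_union, Finset.mem_image]
        constructor
        · rintro ⟨⟨h1, h2⟩, h3⟩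
          by_cases hp : p.2 = m
          · right; exact ⟨p.1, by omega, by rw [← hp]⟩
          · left; exact ⟨⟨by omega, by omega⟩, h3⟩
        · rintro (⟨⟨h1, h2⟩, h3⟩ | ⟨x, hx, rfl⟩)
          · exact ⟨⟨by omega, by omega⟩, h3⟩
          · exact ⟨⟨by omega, by omega⟩, by simpa using hx⟩
      rw [hsplit, Finset.card_union_of_disjoint, ih,
        Finset.card_image_of_injective _ (fun x y h => by simpa using congrArg Prod.fst h),
        Finset.card_range, Nat.choose_succ_succ]
      · simp [Nat.choose_one_right]; ring
      · rw [Finset.disjoint_left]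
        intro p hp hq
        simp only [Finset.mem_image] at hq
        obtain ⟨x, hx, rfl⟩ := hq
        simp only [Finset.mem_filter, Finset.mem_product, Finset.mem_range] at hp
        omega


lemma verts_mono {A B : Finset (ℕ × ℕ)} (h : A ⊆ B) : verts A ⊆ verts B := by
  unfold verts
  exact Finset.union_subset_union (Finset.image_subset_image h) (Finset.image_subset_image h)


/-- Let Z = T ∪ S_j ∪ S_i be a z-tree with |E(T)| = a, |S_j| = b, |S_i| = c,
k = a+b+c, and n ≥ k+1.  The ordered graph G* on {1,…,n} with edge set
E_a ∪ E_b ∪ E_c, where E_a = {xy : 1 ≤ y-x < a}, E_b = {xy : x ≤ b, x < y},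
E_c = {xy : y > n-c, x < y}, has exactly (k-1)n - C(k,2) edges and contains no copy of Z.
(Vertices 1,…,n are modelled by `Fin n`, vertex x having value x-1.) -/
theorem stmt_9 (a b c n : ℕ) (T Sj Si E : Finset (ℕ × ℕ)) (i j : ℕ)
    (hT : IncTree T i j)
    (hSj : ∀ p ∈ Sj, p.2 = j ∧ p.1 < i)
    (hSi : ∀ p ∈ Si, p.1 = i ∧ j < p.2)
    (hE : E = T ∪ Sj ∪ Si)
    (ha : T.card = a) (hb : Sj.card = b) (hc : Si.card = c)
    (hn : a + b + c + 1 ≤ n)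
    (G : SimpleGraph (Fin n))
    (hG : ∀ x y : Fin n, G.Adj x y ↔ x ≠ y ∧
      (max x.val y.val - min x.val y.val < a ∨
       min x.val y.val + 1 ≤ b ∨
       n - c < max x.val y.val + 1)) :
    G.edgeSet.ncard = (a + b + c - 1) * n - (a + b + c).choose 2 ∧ ¬ OContains G E := by
  classical
  have haT : 1 ≤ a := by
    rw [← ha]
    exact Finset.card_pos.2 ⟨(i, j), hT.mem⟩
  constructor
  · -- edge count
    set S : Finset (Fin n × Fin n) :=
      Finset.univ.filter (fun p : Fin n × Fin n => p.1 < p.2) with hS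
    set P : Finset (Fin n × Fin n) := S.filter (fun p => G.Adj p.1 p.2) with hP
    set Q : Finset (Fin n × Fin n) := S.filter (fun p => ¬ G.Adj p.1 p.2) with hQ
    have hPQ : P.card + Q.card = S.card := Finset.card_filter_add_card_filter_not _
    -- S.card = n.choose 2
    have hScard : S.card = n.choose 2 := by
      rw [← card_ltPairs n]
      apply Finset.card_bij (fun (p : Fin n × Fin n) _ => ((p.1 : ℕ), (p.2 : ℕ)))
      · intro p hp
        simp only [hS, Finset.mem_filter, Finset.mem_univ, true_and] at hp
        simp only [Finset.mem_filter, Finset.mem_product, Finset.mem_range]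
        exact ⟨⟨p.1.isLt, p.2.isLt⟩, hp⟩
      · intro p hp q hq hpq
        have h1 := congrArg Prod.fst hpq
        have h2 := congrArg Prod.snd hpq
        simp only at h1 h2
        exact Prod.ext (Fin.val_injective h1) (Fin.val_injective h2)
      · intro q hq
        simp only [Finset.mem_filter, Finset.mem_product, Finset.mem_range] at hq
        refine ⟨(⟨q.1, hq.1.1⟩, ⟨q.2, hq.1.2⟩), ?_, rfl⟩
        simp only [hS, Finset.mem_filter, Finset.mem_univ, true_and]
        exact hq.2
    -- Q.card = (n - (a+b+c) + 1).choose 2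
    have hQcard : Q.card = (n - (a + b + c) + 1).choose 2 := by
      rw [← card_ltPairs (n - (a + b + c) + 1)]
      apply Finset.card_bij
        (fun (p : Fin n × Fin n) _ => ((p.1 : ℕ) - b, (p.2 : ℕ) - b - (a - 1)))
      · intro p hp
        simp only [hQ, hS, Finset.mem_filter, Finset.mem_univ, true_and] at hp
        obtain ⟨hlt, hnadj⟩ := hp
        rw [hG] at hnadj
        push_neg at hnadj
        have hne : p.1 ≠ p.2 := Fin.ne_of_lt hlt
        have hv : (p.1 : ℕ) < (p.2 : ℕ) := hlt
        have hconds := hnadj hne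
        simp only [Finset.mem_filter, Finset.mem_product, Finset.mem_range]
        have h2 := p.2.isLt
        constructor
        · constructor <;> omega
        · omega
      · intro p hp q hq hpq
        simp only [hQ, hS, Finset.mem_filter, Finset.mem_univ, true_and] at hp hq
        obtain ⟨hplt, hpnadj⟩ := hp
        obtain ⟨hqlt, hqnadj⟩ := hq
        rw [hG] at hpnadj hqnadj
        push_neg at hpnadj hqnadj
        have hpc := hpnadj (Fin.ne_of_lt hplt)
        have hqc := hqnadj (Fin.ne_of_lt hqlt)
        have hpv : (p.1 : ℕ) < (p.2 : ℕ) := hplt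
        have hqv : (q.1 : ℕ) < (q.2 : ℕ) := hqlt
        have h1 := congrArg Prod.fst hpq
        have h2 := congrArg Prod.snd hpq
        simp only at h1 h2
        have e1 : (p.1 : ℕ) = (q.1 : ℕ) := by omega
        have e2 : (p.2 : ℕ) = (q.2 : ℕ) := by omega
        exact Prod.ext (Fin.val_injective e1) (Fin.val_injective e2)
      · intro q hq
        simp only [Finset.mem_filter, Finset.mem_product, Finset.mem_range] at hq
        obtain ⟨⟨hq1, hq2⟩, hqlt⟩ := hq
        have hx : q.1 + b < n := by omega
        have hy : q.2 + b + (a - 1) < n := by omega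
        refine ⟨(⟨q.1 + b, hx⟩, ⟨q.2 + b + (a - 1), hy⟩), ?_, ?_⟩
        · simp only [hQ, hS, Finset.mem_filter, Finset.mem_univ, true_and]
          constructor
          · show (q.1 + b : ℕ) < (q.2 + b + (a - 1) : ℕ)
            omega
          · rw [hG]
            push_neg
            intro _
            simp only
            refine ⟨?_, ?_, ?_⟩ <;> omega
        · obtain ⟨q1, q2⟩ := q
          simp only [Prod.mk.injEq]
          constructor <;> omega
      -- end
    -- edgeSet.ncard = P.card
    have hEdge : G.edgeSet.ncard = P.card := by
      have himg : G.edgeSet = ↑(P.image fun p => s(p.1, p.2)) := by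
        ext e
        induction e with
        | _ u v =>
          simp only [SimpleGraph.mem_edgeSet, Finset.coe_image, Set.mem_image,
            Finset.mem_coe]
          constructor
          · intro hadj
            have hne : u ≠ v := G.ne_of_adj hadj
            rcases lt_or_gt_of_ne hne with h | h
            · exact ⟨(u, v), by simp [hP, hS, h, hadj], rfl⟩
            · exact ⟨(v, u), by simp [hP, hS, h, hadj.symm], Sym2.eq_swap⟩
          · rintro ⟨p, hp, he⟩
            have hp' : p ∈ P := hp
            simp only [hP, hS, Finset.mem_filter] at hp'
            rw [Sym2.eq_iff] at he
            rcases he with ⟨rfl, rfl⟩ | ⟨rfl, rfl⟩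
            · exact hp'.2
            · exact hp'.2.symm
      rw [himg, Set.ncard_coe_finset]
      apply Finset.card_image_of_injOn
      intro p hp q hq hpq
      have hp' : p ∈ P := hp
      have hq' : q ∈ P := hq
      simp only [hP, hS, Finset.mem_filter, Finset.mem_univ, true_and] at hp' hq'
      rw [Sym2.eq_iff] at hpq
      rcases hpq with ⟨h1, h2⟩ | ⟨h1, h2⟩
      · exact Prod.ext h1 h2
      · exfalso
        have h3 := hp'.1
        have h4 := hq'.1
        rw [h1, h2] at h3
        exact absurd (h3.trans h4) (lt_irrefl _)
    -- assemble
    have hkey := key_id (a + b + c - 1) (n - (a + b + c))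
    have hn' : (a + b + c - 1) + 1 + (n - (a + b + c)) = n := by omega
    rw [hn'] at hkey
    have hkk : (a + b + c - 1) + 1 = a + b + c := by omega
    rw [hkk] at hkey
    have hss : n - (a + b + c) + 1 = n - (a + b + c) + 1 := rfl
    rw [hEdge]
    omega
  · -- no copy of Z
    rintro ⟨f, hf, hadj⟩
    have hTE : T ⊆ E := by rw [hE]; intro p hp; simp [Finset.mem_union, hp]
    have hSjE : Sj ⊆ E := by rw [hE]; intro p hp; simp [Finset.mem_union, hp]
    have hSiE : Si ⊆ E := by rw [hE]; intro p hp; simp [Finset.mem_union, hp]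
    have hijE : (i, j) ∈ E := hTE hT.mem
    have hiv : i ∈ verts E := (mem_verts_of_mem hijE).1
    have hjv : j ∈ verts E := (mem_verts_of_mem hijE).2
    have hxy : f i < f j := hf i hiv j hjv hT.lt
    -- injectivity of val ∘ f on subsets of verts E
    have hcard_img : ∀ s : Finset ℕ, (∀ v ∈ s, v ∈ verts E) →
        (s.image fun v => (f v : ℕ)).card = s.card := by
      intro s hs
      apply Finset.card_image_of_injOn
      intro u hu v hv huv
      rcases lt_trichotomy u v with h | h | h
      · exact absurd (Fin.val_injective huv) (hf u (hs u hu) v (hs v hv) h).ne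
      · exact h
      · exact absurd (Fin.val_injective huv) (hf v (hs v hv) u (hs u hu) h).ne'
    -- Claim 1 : (f i : ℕ) + a ≤ (f j : ℕ)
    have claim1 : (f i : ℕ) + a ≤ (f j : ℕ) := by
      have hsub : ∀ v ∈ verts T, v ∈ verts E := fun v hv => verts_mono hTE hv
      have himg : ((verts T).image fun v => (f v : ℕ)) ⊆ Finset.Icc (f i : ℕ) (f j : ℕ) := by
        intro w hw
        simp only [Finset.mem_image] at hw
        obtain ⟨v, hv, rfl⟩ := hw
        have hbet := hT.verts_between v hv
        simp only [Finset.mem_Icc]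
        constructor
        · rcases eq_or_lt_of_le hbet.1 with h | h
          · rw [← h]
          · exact le_of_lt (hf i hiv v (hsub v hv) h)
        · rcases eq_or_lt_of_le hbet.2 with h | h
          · rw [h]
          · exact le_of_lt (hf v (hsub v hv) j hjv h)
      have h1 : ((verts T).image fun v => (f v : ℕ)).card = a + 1 := by
        rw [hcard_img _ hsub, hT.card_verts, ha]
      have h2 := Finset.card_le_card himg
      rw [h1, Nat.card_Icc] at h2
      omega
    -- Claim 2 : b ≤ (f i : ℕ)
    have claim2 : b ≤ (f i : ℕ) := by
      have hBcard : (Sj.image Prod.fst).card = b := by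
        rw [← hb]
        apply Finset.card_image_of_injOn
        intro p hp q hq hpq
        exact Prod.ext hpq (((hSj p hp).1).trans ((hSj q hq).1).symm)
      have hBsub : ∀ v ∈ Sj.image Prod.fst, v ∈ verts E := by
        intro v hv
        simp only [Finset.mem_image] at hv
        obtain ⟨p, hp, rfl⟩ := hv
        exact (mem_verts_of_mem (hSjE hp)).1
      have himg : ((Sj.image Prod.fst).image fun v => (f v : ℕ)) ⊆
          Finset.range (f i : ℕ) := by
        intro w hw
        simp only [Finset.mem_image] at hw
        obtain ⟨v, hv, rfl⟩ := hw
        obtain ⟨p, hp, rfl⟩ := hv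
        simp only [Finset.mem_range]
        exact hf p.1 (hBsub p.1 (Finset.mem_image_of_mem _ hp)) i hiv (hSj p hp).2
      have h2 := Finset.card_le_card himg
      rw [hcard_img _ hBsub, hBcard, Finset.card_range] at h2
      exact h2
    -- Claim 3 : (f j : ℕ) + 1 + c ≤ n
    have claim3 : (f j : ℕ) + 1 + c ≤ n := by
      have hCcard : (Si.image Prod.snd).card = c := by
        rw [← hc]
        apply Finset.card_image_of_injOn
        intro p hp q hq hpq
        exact Prod.ext (((hSi p hp).1).trans ((hSi q hq).1).symm) hpq
      have hCsub : ∀ v ∈ Si.image Prod.snd, v ∈ verts E := by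
        intro v hv
        simp only [Finset.mem_image] at hv
        obtain ⟨p, hp, rfl⟩ := hv
        exact (mem_verts_of_mem (hSiE hp)).2
      have himg : ((Si.image Prod.snd).image fun v => (f v : ℕ)) ⊆
          Finset.Ico ((f j : ℕ) + 1) n := by
        intro w hw
        simp only [Finset.mem_image] at hw
        obtain ⟨v, hv, rfl⟩ := hw
        obtain ⟨p, hp, rfl⟩ := hv
        simp only [Finset.mem_Ico]
        refine ⟨?_, (f p.2).isLt⟩
        have := hf j hjv p.2 (hCsub p.2 (Finset.mem_image_of_mem _ hp)) (hSi p hp).2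
        omega
      have h2 := Finset.card_le_card himg
      rw [hcard_img _ hCsub, hCcard, Nat.card_Ico] at h2
      omega
    -- contradiction with adjacency of (f i, f j)
    have hadj_ij := hadj (i, j) hijE
    rw [hG] at hadj_ij
    obtain ⟨_, hds⟩ := hadj_ij
    have hv : (f i : ℕ) < (f j : ℕ) := hxy
    simp only at hds
    omega
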